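/- Let N ≥ 1, let n_0, n_1, …, n_N be positive integers with n_0 = n_N, and for l = 1, …, N let A_l be an n_{l−1}×n_l real matrix. Let g ∈ ℝ^{n_0} and suppose β ∈ ℝ^{n_N} satisfies β = φ(A_1·φ(A_2·φ(⋯φ(A_N·β)⋯)) + g). If there exists λ < 1 such that ‖A_l‖_∞ ≤ λ for all l = 1, …, N and ‖g‖_∞ ≤ 1 − λ^N, then ‖β‖_∞ ≤ ‖g‖_∞/(1 − λ^N) ≤ 1, every intermediate vector φ(A_l·φ(⋯φ(A_N·β)⋯)) has sup norm at most λ^{N−l+1}, all clamps are inactive, and β = A_1·A_2·⋯·A_N·β + g. -/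

import Mathlib

/-- Sup norm `‖x‖_∞ = max_i |x_i|`. -/
noncomputable def supNorm {n : ℕ} (x : Fin n → ℝ) : ℝ := ⨆ i, |x i|

/-- Operator norm of a matrix with respect to sup norms, `‖A‖_∞`. -/
noncomputable def supOpNorm {m n : ℕ} (A : Matrix (Fin m) (Fin n) ℝ) : ℝ :=
  sInf {c : ℝ | 0 ≤ c ∧ ∀ x : Fin n → ℝ, supNorm (A.mulVec x) ≤ c * supNorm x}

/-- Coordinatewise clamp `φ(x)_i = min(1, max(−1, x_i))`. -/
noncomputable def clamp1 {n : ℕ} (x : Fin n → ℝ) : Fin n → ℝ := fun i => min 1 (max (-1) (x i))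

/-- `chainA N n A l` is the matrix product `A_l ⬝ A_{l+1} ⬝ ⋯ ⬝ A_N`
(the identity matrix when `l = N + 1`). -/
noncomputable def chainA (N : ℕ) (n : ℕ → ℕ)
    (A : (l : ℕ) → Matrix (Fin (n (l - 1))) (Fin (n l)) ℝ)
    (l : ℕ) : Matrix (Fin (n (l - 1))) (Fin (n N)) ℝ :=
  if h : l ≤ N then
    let C : Matrix (Fin (n l)) (Fin (n N)) ℝ := chainA N n A (l + 1)
    A l * C
  else
    Matrix.of fun i j => if (i : ℕ) = (j : ℕ) then (1 : ℝ) else 0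
termination_by N + 1 - l
decreasing_by omega

/-!
Each clamp is 1-Lipschitz and fixes `0`, so it does not increase the sup norm. Propagating
`‖A_l‖_∞ ≤ λ` through the layers gives `‖w_l‖_∞ ≤ λ^(N+1-l) ‖β‖_∞`, hence
`‖β‖_∞ ≤ λ^N ‖β‖_∞ + ‖g‖_∞`, i.e. `‖β‖_∞ ≤ ‖g‖_∞ / (1 - λ^N) ≤ 1`. With `‖β‖_∞ ≤ 1` every
pre-clamp vector has sup norm at most `1` (at the outer layer, `λ^N + (1 - λ^N)`), so all clamps
act as the identity and the nested equation collapses to the product `A_1 ⋯ A_N`.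
-/

open Matrix

lemma supNorm_eq_norm {n : ℕ} (x : Fin n → ℝ) : supNorm x = ‖x‖ :=
  le_antisymm (Real.iSup_le (fun i => norm_le_pi_norm x i) (norm_nonneg x))
    ((pi_norm_le_iff_of_nonneg (Real.iSup_nonneg fun i => abs_nonneg (x i))).2 fun i =>
      le_ciSup (Set.finite_range fun j => |x j|).bddAbove i)

lemma norm_comp_finCast {m k : ℕ} (h : m = k) (x : Fin m → ℝ) :
    ‖fun i : Fin k => x (Fin.cast h.symm i)‖ = ‖x‖ := by
  subst h; rfl

lemma supOpNorm_nonneg {m n : ℕ} (A : Matrix (Fin m) (Fin n) ℝ) : 0 ≤ supOpNorm A :=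
  Real.sInf_nonneg fun _ hc => hc.1

section LinftyOp

attribute [local instance] Matrix.linftyOpNormedAddCommGroup

lemma supOpNorm_bounds_nonempty {m n : ℕ} (A : Matrix (Fin m) (Fin n) ℝ) :
    {c : ℝ | 0 ≤ c ∧ ∀ x : Fin n → ℝ, supNorm (A *ᵥ x) ≤ c * supNorm x}.Nonempty :=
  ⟨‖A‖, norm_nonneg A, fun x => by
    simpa only [supNorm_eq_norm] using linfty_opNorm_mulVec A x⟩

end LinftyOp

lemma norm_mulVec_le_supOpNorm_mul {m n : ℕ} (A : Matrix (Fin m) (Fin n) ℝ)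
    (x : Fin n → ℝ) : ‖A *ᵥ x‖ ≤ supOpNorm A * ‖x‖ := by
  rcases (norm_nonneg x).eq_or_lt with hx | hx
  · rw [← hx, mul_zero, norm_eq_zero.1 hx.symm, mulVec_zero, norm_zero]
  have hquot : ‖A *ᵥ x‖ / ‖x‖ ≤ supOpNorm A :=
    le_csInf (supOpNorm_bounds_nonempty A) fun c hc =>
      (div_le_iff₀ hx).2 (by simpa only [supNorm_eq_norm] using hc.2 x)
  exact (div_le_iff₀ hx).1 hquot

lemma abs_clamp_le (t : ℝ) : |min 1 (max (-1) t)| ≤ |t| :=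
  abs_le.2 ⟨le_min (by linarith [abs_nonneg t]) (le_max_of_le_right (neg_abs_le t)),
    (min_le_right _ _).trans (max_le (by linarith [abs_nonneg t]) (le_abs_self t))⟩

lemma norm_clamp1_le {n : ℕ} (x : Fin n → ℝ) : ‖clamp1 x‖ ≤ ‖x‖ :=
  (pi_norm_le_iff_of_nonneg (norm_nonneg x)).2 fun i =>
    (abs_clamp_le (x i)).trans (norm_le_pi_norm x i)

lemma norm_clamp1_le_one {n : ℕ} (x : Fin n → ℝ) : ‖clamp1 x‖ ≤ 1 :=
  (pi_norm_le_iff_of_nonneg zero_le_one).2 fun i =>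
    abs_le.2 ⟨le_min (by norm_num) (le_max_left _ _), min_le_left _ _⟩

lemma clamp1_eq_self {n : ℕ} {x : Fin n → ℝ} (h : ‖x‖ ≤ 1) : clamp1 x = x := by
  funext i
  obtain ⟨hlo, hhi⟩ := abs_le.1 ((norm_le_pi_norm x i).trans h)
  simp only [clamp1, max_eq_right hlo, min_eq_right hhi]

lemma norm_mulVec_le_pow_succ_mul {m n : ℕ} {B : Matrix (Fin m) (Fin n) ℝ} {x : Fin n → ℝ}
    {lam c : ℝ} {k : ℕ} (hlam : 0 ≤ lam) (hB : supOpNorm B ≤ lam) (hx : ‖x‖ ≤ lam ^ k * c) :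
    ‖B *ᵥ x‖ ≤ lam ^ (k + 1) * c :=
  calc ‖B *ᵥ x‖ ≤ supOpNorm B * ‖x‖ := norm_mulVec_le_supOpNorm_mul B x
    _ ≤ lam * (lam ^ k * c) := mul_le_mul hB hx (norm_nonneg x) hlam
    _ = lam ^ (k + 1) * c := by rw [pow_succ']; ring

section Layers

variable {N : ℕ} {n : ℕ → ℕ} {A : (l : ℕ) → Matrix (Fin (n (l - 1))) (Fin (n l)) ℝ}
  {w : (l : ℕ) → Fin (n (l - 1)) → ℝ} {l : ℕ}

lemma norm_layer_le_pow_mul {lam : ℝ} (hlam : 0 ≤ lam) (hl : l ≤ N + 1)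
    (hA : ∀ k, l ≤ k → k ≤ N → supOpNorm (A k) ≤ lam)
    (hw : ∀ k, l ≤ k → k ≤ N → w k = clamp1 (A k *ᵥ w (k + 1))) :
    ‖w l‖ ≤ lam ^ (N + 1 - l) * ‖w (N + 1)‖ := by
  refine Nat.decreasingInduction' (P := fun k => ‖w k‖ ≤ lam ^ (N + 1 - k) * ‖w (N + 1)‖)
    (fun k hk hlk ih => ?_) hl (by simp)
  rw [hw k hlk (by omega), show N + 1 - k = N + 1 - (k + 1) + 1 by omega]
  exact (norm_clamp1_le _).trans (norm_mulVec_le_pow_succ_mul hlam (hA k hlk (by omega)) ih)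

/-- Clamp outputs lie in the unit ball, so every layer input does too. -/
lemma layer_eq_mulVec_of_norm_le_one (htop : ‖w (N + 1)‖ ≤ 1)
    (hA : ∀ k, l ≤ k → k ≤ N → supOpNorm (A k) ≤ 1)
    (hw : ∀ k, l ≤ k → k ≤ N → w k = clamp1 (A k *ᵥ w (k + 1))) :
    ∀ k, l ≤ k → k ≤ N → w k = A k *ᵥ w (k + 1) := by
  intro k hlk hkN
  have hin : ‖w (k + 1)‖ ≤ 1 := by
    rcases hkN.eq_or_lt with rfl | hk
    · exact htop
    · rw [hw (k + 1) (by omega) (by omega)]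
      exact norm_clamp1_le_one _
  refine (hw k hlk hkN).trans (clamp1_eq_self ?_)
  calc ‖A k *ᵥ w (k + 1)‖ ≤ supOpNorm (A k) * ‖w (k + 1)‖ := norm_mulVec_le_supOpNorm_mul _ _
    _ ≤ 1 * 1 := mul_le_mul (hA k hlk hkN) hin (norm_nonneg _) zero_le_one
    _ = 1 := one_mul 1

lemma chainA_mulVec_eq (hl : l ≤ N + 1)
    (hw : ∀ k, l ≤ k → k ≤ N → w k = A k *ᵥ w (k + 1)) : chainA N n A l *ᵥ w (N + 1) = w l := by
  refine Nat.decreasingInduction' (P := fun k => chainA N n A k *ᵥ w (N + 1) = w k)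
    (fun k hk hlk ih => ?_) hl ?_
  · rw [chainA, dif_pos (by omega), ← mulVec_mulVec, ih, hw k hlk (by omega)]
  · have hone : (Matrix.of fun (i : Fin (n (N + 1 - 1))) (j : Fin (n N)) =>
        if (i : ℕ) = (j : ℕ) then (1 : ℝ) else 0) = (1 : Matrix (Fin (n N)) (Fin (n N)) ℝ) := by
      ext i j
      simp [Matrix.one_apply, Fin.val_inj]
    rw [chainA, dif_neg (by omega), hone, one_mulVec]

end Layers

theorem stmt10_general (N : ℕ) (hN : 1 ≤ N) (n : ℕ → ℕ)
    (h0 : n 0 = n N)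
    (A : (l : ℕ) → Matrix (Fin (n (l - 1))) (Fin (n l)) ℝ)
    (g : Fin (n 0) → ℝ) (β : Fin (n 0) → ℝ)
    (w : (l : ℕ) → Fin (n (l - 1)) → ℝ)
    (hwtop : w (N + 1) = fun i => β (Fin.cast h0.symm i))
    (hw : ∀ l, 2 ≤ l → l ≤ N → w l = clamp1 ((A l).mulVec (w (l + 1))))
    (hβ : β = clamp1 ((A 1).mulVec (w 2) + g))
    (lam : ℝ) (hlam : lam < 1)
    (hA : ∀ l, 1 ≤ l → l ≤ N → supOpNorm (A l) ≤ lam)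
    (hg : supNorm g ≤ 1 - lam ^ N) :
    supNorm β ≤ supNorm g / (1 - lam ^ N) ∧
    supNorm g / (1 - lam ^ N) ≤ 1 ∧
    (∀ l, 2 ≤ l → l ≤ N → supNorm (w l) ≤ lam ^ (N - l + 1)) ∧
    (∀ l, 2 ≤ l → l ≤ N → w l = (A l).mulVec (w (l + 1))) ∧
    β = (A 1).mulVec (w 2) + g ∧
    β = (chainA N n A 1).mulVec (fun i => β (Fin.cast h0.symm i)) + g := by
  simp only [supNorm_eq_norm] at hg ⊢
  have hlam0 : 0 ≤ lam := (supOpNorm_nonneg (A 1)).trans (hA 1 le_rfl hN)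
  have hden : 0 < 1 - lam ^ N := sub_pos.2 (pow_lt_one₀ hlam0 hlam (by omega))
  have htop : ‖w (N + 1)‖ = ‖β‖ := by rw [hwtop]; exact norm_comp_finCast h0 β
  have hA2 : ∀ k, 2 ≤ k → k ≤ N → supOpNorm (A k) ≤ lam := fun k hk => hA k (by omega)
  have hlayer : ∀ l, 2 ≤ l → l ≤ N + 1 → ‖w l‖ ≤ lam ^ (N + 1 - l) * ‖β‖ := fun l h2 hl =>
    htop ▸ norm_layer_le_pow_mul hlam0 hl (fun k hk => hA2 k (h2.trans hk))
      (fun k hk => hw k (h2.trans hk))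
  have hinner : ‖A 1 *ᵥ w 2‖ ≤ lam ^ N * ‖β‖ := by
    simpa only [show N + 1 - 2 + 1 = N by omega] using
      norm_mulVec_le_pow_succ_mul hlam0 (hA 1 le_rfl hN) (hlayer 2 le_rfl (by omega))
  have hself : ‖β‖ ≤ lam ^ N * ‖β‖ + ‖g‖ := by
    conv_lhs => rw [hβ]
    exact (norm_clamp1_le _).trans ((norm_add_le _ _).trans (by linarith))
  have hβg : ‖β‖ ≤ ‖g‖ / (1 - lam ^ N) := (le_div_iff₀ hden).2 (by linarith)
  have hg1 : ‖g‖ / (1 - lam ^ N) ≤ 1 := (div_le_one hden).2 hg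
  have hβ1 : ‖β‖ ≤ 1 := hβg.trans hg1
  have hlin := layer_eq_mulVec_of_norm_le_one (htop ▸ hβ1)
    (fun k hk hkN => (hA2 k hk hkN).trans hlam.le) hw
  have hβlin : β = A 1 *ᵥ w 2 + g := by
    refine hβ.trans (clamp1_eq_self ((norm_add_le _ _).trans ?_))
    nlinarith [pow_nonneg hlam0 N]
  refine ⟨hβg, hg1, fun l h2 hl => ?_, hlin, hβlin, ?_⟩
  · rw [show N - l + 1 = N + 1 - l by omega]
    exact (hlayer l h2 (by omega)).trans (mul_le_of_le_one_right (by positivity) hβ1)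
  · rw [← hwtop, chainA, dif_pos hN, ← mulVec_mulVec, chainA_mulVec_eq (by omega) hlin]
    exact hβlin

/-- Multilayer ∞-norm chain bound (proof of Theorem 2): at a fixed point
`β = φ(A₁·φ(A₂·φ(⋯φ(A_N·β)⋯)) + g)` with `‖A_l‖_∞ ≤ λ < 1` and `‖g‖_∞ ≤ 1 − λ^N`,
all clamps are inactive and `β = A₁A₂⋯A_N·β + g`.  The nested vector
`w l = φ(A_l·φ(⋯φ(A_N·β)⋯))` is encoded by the family `w` with `w (N+1)` the recast of `β`. -/
theorem stmt10 (N : ℕ) (hN : 1 ≤ N) (n : ℕ → ℕ) (hn : ∀ l, l ≤ N → 0 < n l)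
    (h0 : n 0 = n N)
    (A : (l : ℕ) → Matrix (Fin (n (l - 1))) (Fin (n l)) ℝ)
    (g : Fin (n 0) → ℝ) (β : Fin (n 0) → ℝ)
    (w : (l : ℕ) → Fin (n (l - 1)) → ℝ)
    (hwtop : w (N + 1) = fun i => β (Fin.cast h0.symm i))
    (hw : ∀ l, 2 ≤ l → l ≤ N → w l = clamp1 ((A l).mulVec (w (l + 1))))
    (hβ : β = clamp1 ((A 1).mulVec (w 2) + g))
    (lam : ℝ) (hlam : lam < 1)
    (hA : ∀ l, 1 ≤ l → l ≤ N → supOpNorm (A l) ≤ lam)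
    (hg : supNorm g ≤ 1 - lam ^ N) :
    supNorm β ≤ supNorm g / (1 - lam ^ N) ∧
    supNorm g / (1 - lam ^ N) ≤ 1 ∧
    (∀ l, 2 ≤ l → l ≤ N → supNorm (w l) ≤ lam ^ (N - l + 1)) ∧
    (∀ l, 2 ≤ l → l ≤ N → w l = (A l).mulVec (w (l + 1))) ∧
    β = (A 1).mulVec (w 2) + g ∧
    β = (chainA N n A 1).mulVec (fun i => β (Fin.cast h0.symm i)) + g :=
  stmt10_general N hN n h0 A g β w hwtop hw hβ lam hlam hA hg
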